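/- For discrete random variables A, B, M: E_{m ← M}[ SD( (A,B)|_{M=m} , A|_{M=m} × B|_{M=m} ) ] ≤ 2·E_{b ← B}[ SD( (A,M)|_{B=b} , A|_{B=b} × M|_{B=b} ) ] + 2·SD( (A,B)-joint , A × B ). -/
import Mathlib


open scoped BigOperators Classical

noncomputable section

variable {Ω : Type*} [Fintype Ω]

/-- Probability of an event under a mass function `μ`. -/
def prEv (μ : Ω → ℝ) (E : Ω → Prop) : ℝ := ∑ ω, if E ω then μ ω else 0

/-- Distribution (pmf) of a random variable. -/
def rvDist (μ : Ω → ℝ) {α : Type*} (X : Ω → α) : α → ℝ :=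
  fun a => prEv μ (fun ω => X ω = a)

/-- Conditional distribution of `X` given the event `B = b`. -/
def condDist (μ : Ω → ℝ) {α β : Type*} (X : Ω → α) (B : Ω → β) (b : β) : α → ℝ :=
  fun a => prEv μ (fun ω => X ω = a ∧ B ω = b) / prEv μ (fun ω => B ω = b)

/-- Product of two distributions. -/
def prodDist {α β : Type*} (P : α → ℝ) (Q : β → ℝ) : α × β → ℝ := fun p => P p.1 * Q p.2

/-- Statistical (total variation) distance between two distributions on a finite set. -/
def SD {α : Type*} [Fintype α] (P Q : α → ℝ) : ℝ := (1/2) * ∑ a, |P a - Q a|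

/-- Shannon entropy (base 2) of a distribution, with the convention `0 · log(1/0) = 0`. -/
def H2 {α : Type*} [Fintype α] (P : α → ℝ) : ℝ :=
  ∑ a, if P a = 0 then 0 else P a * Real.logb 2 (1 / P a)

/-- Shannon entropy of a random variable. -/
def entRV (μ : Ω → ℝ) {α : Type*} [Fintype α] (X : Ω → α) : ℝ := H2 (rvDist μ X)

/-- Conditional mutual information `I(A;B|C)` (in bits). -/
def condMI (μ : Ω → ℝ) {α β γ : Type*} [Fintype α] [Fintype β] [Fintype γ]
    (A : Ω → α) (B : Ω → β) (C : Ω → γ) : ℝ :=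
  entRV μ (fun ω => (A ω, C ω)) + entRV μ (fun ω => (B ω, C ω))
    - entRV μ (fun ω => (A ω, B ω, C ω)) - entRV μ C

/-- The conditional probability measure given `Z = z`. -/
def condMeas (μ : Ω → ℝ) {ζ : Type*} (Z : Ω → ζ) (z : ζ) : Ω → ℝ :=
  fun ω => if Z ω = z then μ ω / prEv μ (fun ω' => Z ω' = z) else 0

/-- `μ` is a probability mass function. -/
def IsPMF (μ : Ω → ℝ) : Prop := (∀ ω, 0 ≤ μ ω) ∧ ∑ ω, μ ω = 1

end

section aux
variable {Ω : Type*} [Fintype Ω]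

lemma prEv_congr' (μ : Ω → ℝ) {E F : Ω → Prop} (h : ∀ ω, E ω ↔ F ω) :
    prEv μ E = prEv μ F :=
  Finset.sum_congr rfl fun ω _ => by simp only [h ω]

lemma prEv_nonneg' (μ : Ω → ℝ) (h0 : ∀ ω, 0 ≤ μ ω) (E : Ω → Prop) : 0 ≤ prEv μ E :=
  Finset.sum_nonneg fun ω _ => by by_cases h : E ω <;> simp [h, h0 ω]

lemma prEv_mono' (μ : Ω → ℝ) (h0 : ∀ ω, 0 ≤ μ ω) {E F : Ω → Prop}
    (h : ∀ ω, E ω → F ω) : prEv μ E ≤ prEv μ F := by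
  refine Finset.sum_le_sum fun ω _ => ?_
  by_cases hE : E ω
  · simp [hE, h ω hE]
  · by_cases hF : F ω <;> simp [hE, hF, h0 ω]

lemma condDist_mul' (μ : Ω → ℝ) (h0 : ∀ ω, 0 ≤ μ ω) {α' ζ : Type*}
    (X : Ω → α') (Z : Ω → ζ) (z : ζ) (x : α') :
    condDist μ X Z z x * prEv μ (fun ω => Z ω = z)
      = prEv μ (fun ω => X ω = x ∧ Z ω = z) := by
  by_cases h : prEv μ (fun ω => Z ω = z) = 0
  · rw [h, mul_zero]
    have hle := prEv_mono' μ h0 (fun ω (hω : X ω = x ∧ Z ω = z) => hω.2)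
    have hnn := prEv_nonneg' μ h0 (fun ω => X ω = x ∧ Z ω = z)
    linarith
  · unfold condDist
    field_simp

lemma prEv_sum_fiber' (μ : Ω → ℝ) {ζ : Type*} [Fintype ζ] (E : Ω → Prop) (Y : Ω → ζ) :
    ∑ y : ζ, prEv μ (fun ω => E ω ∧ Y ω = y) = prEv μ E := by
  unfold prEv
  rw [Finset.sum_comm]
  refine Finset.sum_congr rfl fun ω _ => ?_
  by_cases hE : E ω <;> simp [hE]

lemma weighted_SD (μ : Ω → ℝ) (h0 : ∀ ω, 0 ≤ μ ω)
    {α' β' ζ : Type*} [Fintype α'] [Fintype β']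
    (X : Ω → α') (Y : Ω → β') (Z : Ω → ζ) (z : ζ) :
    rvDist μ Z z * SD (condDist μ (fun ω => (X ω, Y ω)) Z z)
        (prodDist (condDist μ X Z z) (condDist μ Y Z z))
      = (1/2) * ∑ x, ∑ y,
          |prEv μ (fun ω => X ω = x ∧ Y ω = y ∧ Z ω = z)
            - condDist μ X Z z x * prEv μ (fun ω => Y ω = y ∧ Z ω = z)| := by
  have hz : rvDist μ Z z = prEv μ (fun ω => Z ω = z) := rfl
  have hpz : 0 ≤ prEv μ (fun ω => Z ω = z) := prEv_nonneg' μ h0 _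
  unfold SD prodDist
  rw [Fintype.sum_prod_type, mul_left_comm, Finset.mul_sum]
  congr 1
  refine Finset.sum_congr rfl fun x _ => ?_
  rw [Finset.mul_sum]
  refine Finset.sum_congr rfl fun y _ => ?_
  have h1 : prEv μ (fun ω => Z ω = z) * condDist μ (fun ω => (X ω, Y ω)) Z z (x, y)
      = prEv μ (fun ω => X ω = x ∧ Y ω = y ∧ Z ω = z) := by
    rw [mul_comm, condDist_mul' μ h0]
    exact prEv_congr' μ (fun ω => by simp [Prod.ext_iff, and_assoc])
  have h2 : prEv μ (fun ω => Z ω = z) * (condDist μ X Z z x * condDist μ Y Z z y)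
      = condDist μ X Z z x * prEv μ (fun ω => Y ω = y ∧ Z ω = z) := by
    rw [← condDist_mul' μ h0 Y Z z y]; ring
  rw [hz, ← abs_of_nonneg hpz, ← abs_mul, mul_sub, h1, h2]

end aux

/-- `E_{m←M}[SD((A,B)|_m, A|_m × B|_m)] ≤ 2·E_{b←B}[SD((A,M)|_b, A|_b × M|_b)] + 2·SD((A,B), A × B)`. -/
theorem expected_condSD_le_two_expected_add_two_SD {Ω α β γ : Type*}
    [Fintype Ω] [Fintype α] [Fintype β] [Fintype γ]
    (μ : Ω → ℝ) (hμ : IsPMF μ)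
    (A : Ω → α) (B : Ω → β) (M : Ω → γ) :
    ∑ m : γ, rvDist μ M m *
        SD (condDist μ (fun ω => (A ω, B ω)) M m)
           (prodDist (condDist μ A M m) (condDist μ B M m))
      ≤ 2 * (∑ b : β, rvDist μ B b *
              SD (condDist μ (fun ω => (A ω, M ω)) B b)
                 (prodDist (condDist μ A B b) (condDist μ M B b)))
        + 2 * SD (rvDist μ (fun ω => (A ω, B ω)))
                 (prodDist (rvDist μ A) (rvDist μ B)) := by
  classical
  obtain ⟨h0, -⟩ := hμ
  set J : α → β → γ → ℝ :=
    fun a b m => prEv μ (fun ω => A ω = a ∧ B ω = b ∧ M ω = m) with hJ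
  set pBM : β → γ → ℝ := fun b m => prEv μ (fun ω => B ω = b ∧ M ω = m) with hpBM
  set Qv : α → β → γ → ℝ := fun a b m => condDist μ A M m a * pBM b m with hQv
  set Rv : α → β → γ → ℝ := fun a b m => condDist μ A B b a * pBM b m with hRv
  set Tv : α → β → γ → ℝ := fun a b m => rvDist μ A a * pBM b m with hTv
  have hpBMnn : ∀ b m, 0 ≤ pBM b m := fun b m => prEv_nonneg' μ h0 _
  have hmargM : ∀ b, ∑ m, pBM b m = rvDist μ B b := fun b =>
    prEv_sum_fiber' μ (fun ω => B ω = b) M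
  have hmargB : ∀ m, ∑ b, pBM b m = rvDist μ M m := by
    intro m
    calc ∑ b, pBM b m = ∑ b, prEv μ (fun ω => M ω = m ∧ B ω = b) :=
          Finset.sum_congr rfl fun b _ => prEv_congr' μ (fun ω => and_comm)
      _ = rvDist μ M m := prEv_sum_fiber' μ (fun ω => M ω = m) B
  have hJb : ∀ a m, ∑ b, J a b m = prEv μ (fun ω => A ω = a ∧ M ω = m) := by
    intro a m
    calc ∑ b, J a b m = ∑ b, prEv μ (fun ω => (A ω = a ∧ M ω = m) ∧ B ω = b) :=
          Finset.sum_congr rfl fun b _ => prEv_congr' μ (fun ω => by tauto)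
      _ = prEv μ (fun ω => A ω = a ∧ M ω = m) := prEv_sum_fiber' μ _ B
  have hAB : ∀ a b, condDist μ A B b a * rvDist μ B b
      = prEv μ (fun ω => A ω = a ∧ B ω = b) := fun a b => condDist_mul' μ h0 A B b a
  have hAM : ∀ a m, condDist μ A M m a * rvDist μ M m
      = prEv μ (fun ω => A ω = a ∧ M ω = m) := fun a m => condDist_mul' μ h0 A M m a
  -- LHS expression
  have eqL : ∑ m : γ, rvDist μ M m *
        SD (condDist μ (fun ω => (A ω, B ω)) M m)
           (prodDist (condDist μ A M m) (condDist μ B M m))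
      = (1/2) * ∑ a, ∑ m, ∑ b, |J a b m - Qv a b m| := by
    have := fun m => weighted_SD μ h0 A B M m
    calc ∑ m : γ, rvDist μ M m *
          SD (condDist μ (fun ω => (A ω, B ω)) M m)
             (prodDist (condDist μ A M m) (condDist μ B M m))
        = ∑ m, (1/2) * ∑ a, ∑ b, |J a b m - Qv a b m| :=
          Finset.sum_congr rfl fun m _ => this m
      _ = (1/2) * ∑ m, ∑ a, ∑ b, |J a b m - Qv a b m| := by
          rw [Finset.mul_sum]
      _ = (1/2) * ∑ a, ∑ m, ∑ b, |J a b m - Qv a b m| := by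
          rw [Finset.sum_comm]
  -- first RHS term
  have eqR1 : ∑ b : β, rvDist μ B b *
        SD (condDist μ (fun ω => (A ω, M ω)) B b)
           (prodDist (condDist μ A B b) (condDist μ M B b))
      = (1/2) * ∑ a, ∑ m, ∑ b, |J a b m - Rv a b m| := by
    calc ∑ b : β, rvDist μ B b *
          SD (condDist μ (fun ω => (A ω, M ω)) B b)
             (prodDist (condDist μ A B b) (condDist μ M B b))
        = ∑ b, (1/2) * ∑ a, ∑ m,
            |prEv μ (fun ω => A ω = a ∧ M ω = m ∧ B ω = b)
              - condDist μ A B b a * prEv μ (fun ω => M ω = m ∧ B ω = b)| :=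
          Finset.sum_congr rfl fun b _ => weighted_SD μ h0 A M B b
      _ = ∑ b, (1/2) * ∑ a, ∑ m, |J a b m - Rv a b m| := by
          refine Finset.sum_congr rfl fun b _ => ?_
          congr 1
          refine Finset.sum_congr rfl fun a _ => Finset.sum_congr rfl fun m _ => ?_
          rw [show prEv μ (fun ω => A ω = a ∧ M ω = m ∧ B ω = b) = J a b m from
              prEv_congr' μ (fun ω => by tauto),
            show prEv μ (fun ω => M ω = m ∧ B ω = b) = pBM b m from
              prEv_congr' μ (fun ω => and_comm)]
      _ = (1/2) * ∑ b, ∑ a, ∑ m, |J a b m - Rv a b m| := by rw [Finset.mul_sum]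
      _ = (1/2) * ∑ a, ∑ b, ∑ m, |J a b m - Rv a b m| := by rw [Finset.sum_comm]
      _ = (1/2) * ∑ a, ∑ m, ∑ b, |J a b m - Rv a b m| := by
          congr 1
          exact Finset.sum_congr rfl fun a _ => Finset.sum_comm
  -- second RHS term
  have eqR2 : 2 * SD (rvDist μ (fun ω => (A ω, B ω)))
        (prodDist (rvDist μ A) (rvDist μ B))
      = ∑ a, ∑ m, ∑ b, |Rv a b m - Tv a b m| := by
    have hstep : ∀ a b, ∑ m, |Rv a b m - Tv a b m|
        = |rvDist μ (fun ω => (A ω, B ω)) (a, b) - rvDist μ A a * rvDist μ B b| := by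
      intro a b
      calc ∑ m, |Rv a b m - Tv a b m|
          = ∑ m, |condDist μ A B b a - rvDist μ A a| * pBM b m := by
            refine Finset.sum_congr rfl fun m _ => ?_
            rw [hRv, hTv, ← sub_mul, abs_mul, abs_of_nonneg (hpBMnn b m)]
        _ = |condDist μ A B b a - rvDist μ A a| * rvDist μ B b := by
            rw [← Finset.mul_sum, hmargM]
        _ = |condDist μ A B b a * rvDist μ B b - rvDist μ A a * rvDist μ B b| := by
            have hb : (0:ℝ) ≤ rvDist μ B b := prEv_nonneg' μ h0 _
            rw [← sub_mul, abs_mul, abs_of_nonneg hb]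
        _ = |rvDist μ (fun ω => (A ω, B ω)) (a, b) - rvDist μ A a * rvDist μ B b| := by
            rw [hAB]
            congr 1
            rw [show rvDist μ (fun ω => (A ω, B ω)) (a, b)
                = prEv μ (fun ω => A ω = a ∧ B ω = b) from
                prEv_congr' μ (fun ω => by simp [Prod.ext_iff])]
    calc 2 * SD (rvDist μ (fun ω => (A ω, B ω))) (prodDist (rvDist μ A) (rvDist μ B))
        = ∑ p : α × β, |rvDist μ (fun ω => (A ω, B ω)) p
            - rvDist μ A p.1 * rvDist μ B p.2| := by
          unfold SD prodDist; ring
      _ = ∑ a, ∑ b, |rvDist μ (fun ω => (A ω, B ω)) (a, b)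
            - rvDist μ A a * rvDist μ B b| := by rw [Fintype.sum_prod_type]
      _ = ∑ a, ∑ b, ∑ m, |Rv a b m - Tv a b m| := by
          exact Finset.sum_congr rfl fun a _ => Finset.sum_congr rfl fun b _ =>
            (hstep a b).symm
      _ = ∑ a, ∑ m, ∑ b, |Rv a b m - Tv a b m| :=
          Finset.sum_congr rfl fun a _ => Finset.sum_comm
  -- data-processing step
  have ineqTQ : ∑ a, ∑ m, ∑ b, |Tv a b m - Qv a b m|
      ≤ ∑ a, ∑ m, ∑ b, |J a b m - Tv a b m| := by
    refine Finset.sum_le_sum fun a _ => Finset.sum_le_sum fun m _ => ?_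
    have hTQ : ∑ b, |Tv a b m - Qv a b m|
        = |rvDist μ A a * rvDist μ M m - prEv μ (fun ω => A ω = a ∧ M ω = m)| := by
      calc ∑ b, |Tv a b m - Qv a b m|
          = ∑ b, |rvDist μ A a - condDist μ A M m a| * pBM b m := by
            refine Finset.sum_congr rfl fun b _ => ?_
            rw [hTv, hQv, ← sub_mul, abs_mul, abs_of_nonneg (hpBMnn b m)]
        _ = |rvDist μ A a - condDist μ A M m a| * rvDist μ M m := by
            rw [← Finset.mul_sum, hmargB]
        _ = |rvDist μ A a * rvDist μ M m - condDist μ A M m a * rvDist μ M m| := by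
            have hm : (0:ℝ) ≤ rvDist μ M m := prEv_nonneg' μ h0 _
            rw [← sub_mul, abs_mul, abs_of_nonneg hm]
        _ = |rvDist μ A a * rvDist μ M m - prEv μ (fun ω => A ω = a ∧ M ω = m)| := by
            rw [hAM]
    rw [hTQ]
    have hsumT : ∑ b, Tv a b m = rvDist μ A a * rvDist μ M m := by
      simp only [hTv]; rw [← Finset.mul_sum, hmargB]
    have h1 : |rvDist μ A a * rvDist μ M m - prEv μ (fun ω => A ω = a ∧ M ω = m)|
        = |∑ b, (Tv a b m - J a b m)| := by
      rw [Finset.sum_sub_distrib, hsumT, hJb]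
    rw [h1]
    refine (Finset.abs_sum_le_sum_abs _ _).trans ?_
    exact Finset.sum_le_sum fun b _ => le_of_eq (abs_sub_comm _ _)
  -- pointwise triangle inequalities
  have tri1 : ∑ a, ∑ m, ∑ b, |J a b m - Qv a b m|
      ≤ ∑ a, ∑ m, ∑ b, (|J a b m - Rv a b m| + |Rv a b m - Tv a b m|
          + |Tv a b m - Qv a b m|) := by
    refine Finset.sum_le_sum fun a _ => Finset.sum_le_sum fun m _ =>
      Finset.sum_le_sum fun b _ => ?_
    calc |J a b m - Qv a b m| ≤ |J a b m - Tv a b m| + |Tv a b m - Qv a b m| :=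
          abs_sub_le _ _ _
      _ ≤ (|J a b m - Rv a b m| + |Rv a b m - Tv a b m|) + |Tv a b m - Qv a b m| := by
          gcongr; exact abs_sub_le _ _ _
      _ = _ := by ring
  have tri2 : ∑ a, ∑ m, ∑ b, |J a b m - Tv a b m|
      ≤ ∑ a, ∑ m, ∑ b, (|J a b m - Rv a b m| + |Rv a b m - Tv a b m|) := by
    refine Finset.sum_le_sum fun a _ => Finset.sum_le_sum fun m _ =>
      Finset.sum_le_sum fun b _ => abs_sub_le _ _ _
  simp only [Finset.sum_add_distrib] at tri1 tri2
  rw [eqL, eqR1, eqR2]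
  linarith [ineqTQ, tri1, tri2]
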